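/- Any two entropy productions differ by a total derivative of the dynamics: for all 0 ≤ i, j ≤ n, σ_i − σ_j = L(R_i − R_j) (as an identity of smooth functions on X). -/

import Mathlib

open scoped BigOperators
open MeasureTheory

noncomputable section

namespace EP

/-- `d`-dimensional vectors. -/
abbrev Vec (d : ℕ) := Fin d → ℝ

/-- The phase space `X = (ℝ^d)^n × (ℝ^d)^n × (ℝ^d × ℝ^d)`,
coordinates `x = (p, q, (r₁, rₙ))`. -/
abbrev Phase (d n : ℕ) := (Fin n → Vec d) × (Fin n → Vec d) × (Vec d × Vec d)

/-- Euclidean dot product on `ℝ^d`. -/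
def dotp {d : ℕ} (a b : Vec d) : ℝ := ∑ j, a j * b j

/-- 1-based access to an `n`-tuple of vectors (defaults to `0` out of range;
all uses below are in range). -/
def nth {d n : ℕ} (v : Fin n → Vec d) (i : ℕ) : Vec d :=
  if h : 1 ≤ i ∧ i ≤ n then v ⟨i - 1, by omega⟩ else 0

/-- The coordinate direction `j` of the `i`-th (1-based) vector in `(ℝ^d)^n`. -/
def basisQ (d n : ℕ) (i : ℕ) (j : Fin d) : Fin n → Vec d :=
  if h : 1 ≤ i ∧ i ≤ n then Pi.single (⟨i - 1, by omega⟩ : Fin n) (Pi.single j 1) else 0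

/-- Coordinate direction in `X`: component `j` of `p_i`. -/
def eP (d n : ℕ) (i : ℕ) (j : Fin d) : Phase d n := (basisQ d n i j, 0, 0, 0)
/-- Coordinate direction in `X`: component `j` of `q_i`. -/
def eQ (d n : ℕ) (i : ℕ) (j : Fin d) : Phase d n := (0, basisQ d n i j, 0, 0)
/-- Coordinate direction in `X`: component `j` of `r₁`. -/
def eR1 (d n : ℕ) (j : Fin d) : Phase d n := (0, 0, Pi.single j 1, 0)
/-- Coordinate direction in `X`: component `j` of `rₙ`. -/
def eRn (d n : ℕ) (j : Fin d) : Phase d n := (0, 0, 0, Pi.single j 1)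

/-- First-order partial derivative of `f` in direction `v` at `x`. -/
def pd {d n : ℕ} (f : Phase d n → ℝ) (v x : Phase d n) : ℝ := fderiv ℝ f x v

/-- Second-order partial derivative of `f` in direction `v` at `x`. -/
def pd2 {d n : ℕ} (f : Phase d n → ℝ) (v x : Phase d n) : ℝ :=
  fderiv ℝ (fun y => fderiv ℝ f y v) x v

/-- The potential `V(q) = Σ_{i=1}^n U¹(q_i) + Σ_{i=1}^{n-1} U²(q_i - q_{i+1})`. -/
def Vpot (d n : ℕ) (U1 U2 : Vec d → ℝ) (q : Fin n → Vec d) : ℝ :=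
  (∑ i ∈ Finset.Icc 1 n, U1 (nth q i)) +
  (∑ i ∈ Finset.Icc 1 (n - 1), U2 (nth q i - nth q (i + 1)))

/-- `L₀ f = γ(T₁ Δ_{r₁} f + Tₙ Δ_{rₙ} f - r₁·∇_{r₁} f - rₙ·∇_{rₙ} f)`. -/
def gen0 (d n : ℕ) (ga T1 Tn : ℝ) (f : Phase d n → ℝ) (x : Phase d n) : ℝ :=
  ga * (T1 * ∑ j, pd2 f (eR1 d n j) x + Tn * ∑ j, pd2 f (eRn d n j) x
      - ∑ j, x.2.2.1 j * pd f (eR1 d n j) x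
      - ∑ j, x.2.2.2 j * pd f (eRn d n j) x)

/-- The first-order part
`L₁ f = λ(p₁·∇_{r₁} f + pₙ·∇_{rₙ} f - r₁·∇_{p₁} f - rₙ·∇_{pₙ} f)
  + (Σ p_i·∇_{q_i} f - Σ ∇_{q_i}V·∇_{p_i} f)`. -/
def gen1 (d n : ℕ) (U1 U2 : Vec d → ℝ) (lam : ℝ) (f : Phase d n → ℝ) (x : Phase d n) : ℝ :=
  lam * ((∑ j, nth x.1 1 j * pd f (eR1 d n j) x)
       + (∑ j, nth x.1 n j * pd f (eRn d n j) x)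
       - (∑ j, x.2.2.1 j * pd f (eP d n 1 j) x)
       - (∑ j, x.2.2.2 j * pd f (eP d n n j) x))
  + ((∑ i ∈ Finset.Icc 1 n, ∑ j, nth x.1 i j * pd f (eQ d n i j) x)
   - (∑ i ∈ Finset.Icc 1 n, ∑ j,
       fderiv ℝ (Vpot d n U1 U2) x.2.1 (basisQ d n i j) * pd f (eP d n i j) x))

/-- The generator `L = L₀ + L₁`. -/
def gen (d n : ℕ) (U1 U2 : Vec d → ℝ) (ga lam T1 Tn : ℝ)
    (f : Phase d n → ℝ) (x : Phase d n) : ℝ :=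
  gen0 d n ga T1 Tn f x + gen1 d n U1 U2 lam f x

/-- The formal adjoint `Lᵀ`. -/
def genT (d n : ℕ) (U1 U2 : Vec d → ℝ) (ga lam T1 Tn : ℝ)
    (g : Phase d n → ℝ) (x : Phase d n) : ℝ :=
  ga * (T1 * ∑ j, pd2 g (eR1 d n j) x + Tn * ∑ j, pd2 g (eRn d n j) x
      + ∑ j, x.2.2.1 j * pd g (eR1 d n j) x
      + ∑ j, x.2.2.2 j * pd g (eRn d n j) x
      + 2 * (d : ℝ) * g x)
  - lam * ((∑ j, nth x.1 1 j * pd g (eR1 d n j) x)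
         + (∑ j, nth x.1 n j * pd g (eRn d n j) x)
         - (∑ j, x.2.2.1 j * pd g (eP d n 1 j) x)
         - (∑ j, x.2.2.2 j * pd g (eP d n n j) x))
  - ((∑ i ∈ Finset.Icc 1 n, ∑ j, nth x.1 i j * pd g (eQ d n i j) x)
   - (∑ i ∈ Finset.Icc 1 n, ∑ j,
       fderiv ℝ (Vpot d n U1 U2) x.2.1 (basisQ d n i j) * pd g (eP d n i j) x))

/-- The heat flows `Φ_i`, `0 ≤ i ≤ n`. -/
def flow (d n : ℕ) (U2 : Vec d → ℝ) (lam : ℝ) (i : ℕ) (x : Phase d n) : ℝ :=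
  if i = 0 then - lam * dotp x.2.2.1 (nth x.1 1)
  else if i = n then lam * dotp x.2.2.2 (nth x.1 n)
  else ∑ j, ((nth x.1 i j + nth x.1 (i + 1) j) / 2) *
        fderiv ℝ U2 (nth x.2.1 i - nth x.2.1 (i + 1)) (Pi.single j 1)

/-- The entropy productions `σ_i = (1/Tₙ - 1/T₁) Φ_i`. -/
def sigmaF (d n : ℕ) (U2 : Vec d → ℝ) (lam T1 Tn : ℝ) (i : ℕ) (x : Phase d n) : ℝ :=
  (1 / Tn - 1 / T1) * flow d n U2 lam i x

/-- The local energies `H_i`, `1 ≤ i ≤ n`. -/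
def locH (d n : ℕ) (U1 U2 : Vec d → ℝ) (i : ℕ) (x : Phase d n) : ℝ :=
  dotp (nth x.1 i) (nth x.1 i) / 2 + U1 (nth x.2.1 i)
  + (if 2 ≤ i then U2 (nth x.2.1 (i - 1) - nth x.2.1 i) else 0) / 2
  + (if i < n then U2 (nth x.2.1 i - nth x.2.1 (i + 1)) else 0) / 2

/-- `R_i = (1/T₁)(|r₁|²/2 + Σ_{k=1}^i H_k) + (1/Tₙ)(Σ_{k=i+1}^n H_k + |rₙ|²/2)`. -/
def Rfun (d n : ℕ) (U1 U2 : Vec d → ℝ) (T1 Tn : ℝ) (i : ℕ) (x : Phase d n) : ℝ :=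
  (1 / T1) * (dotp x.2.2.1 x.2.2.1 / 2 + ∑ k ∈ Finset.Icc 1 i, locH d n U1 U2 k x)
  + (1 / Tn) * ((∑ k ∈ Finset.Icc (i + 1) n, locH d n U1 U2 k x) + dotp x.2.2.2 x.2.2.2 / 2)

/-- The total energy `G(p,q,r) = |r₁|²/2 + |rₙ|²/2 + Σ|p_i|²/2 + V(q)`. -/
def Gfun (d n : ℕ) (U1 U2 : Vec d → ℝ) (x : Phase d n) : ℝ :=
  dotp x.2.2.1 x.2.2.1 / 2 + dotp x.2.2.2 x.2.2.2 / 2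
  + (∑ i : Fin n, dotp (x.1 i) (x.1 i) / 2) + Vpot d n U1 U2 x.2.1

/-- The chain energy `H_S(p,q) = Σ|p_i|²/2 + V(q)`. -/
def HS (d n : ℕ) (U1 U2 : Vec d → ℝ) (x : Phase d n) : ℝ :=
  (∑ i : Fin n, dotp (x.1 i) (x.1 i) / 2) + Vpot d n U1 U2 x.2.1

/-- Momentum reversal `(Jf)(p,q,r) = f(-p,q,r)`. -/
def Jop {d n : ℕ} (f : Phase d n → ℝ) : Phase d n → ℝ := fun x => f (-x.1, x.2)

/-- `L̃_α f = L f + 2αγ (r₁·∇_{r₁} f + rₙ·∇_{rₙ} f)`. -/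
def genTilde (d n : ℕ) (U1 U2 : Vec d → ℝ) (ga lam T1 Tn al : ℝ)
    (f : Phase d n → ℝ) (x : Phase d n) : ℝ :=
  gen d n U1 U2 ga lam T1 Tn f x
  + 2 * al * ga * ((∑ j, x.2.2.1 j * pd f (eR1 d n j) x)
                 + (∑ j, x.2.2.2 j * pd f (eRn d n j) x))

/-- `L̄_α f = L̃_α f - ((α-α²)γ(|r₁|²/T₁ + |rₙ|²/Tₙ) - 2dαγ) f`. -/
def genBar (d n : ℕ) (U1 U2 : Vec d → ℝ) (ga lam T1 Tn al : ℝ)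
    (f : Phase d n → ℝ) (x : Phase d n) : ℝ :=
  genTilde d n U1 U2 ga lam T1 Tn al f x
  - ((al - al ^ 2) * ga * (dotp x.2.2.1 x.2.2.1 / T1 + dotp x.2.2.2 x.2.2.2 / Tn)
     - 2 * (d : ℝ) * al * ga) * f x
section AUX
open Finset
variable {d n : ℕ}

@[simp] lemma nth_zero (i : ℕ) : nth (0 : Fin n → Vec d) i = 0 := by
  unfold nth; split_ifs <;> simp

lemma nth_add (a b : Fin n → Vec d) (i : ℕ) : nth (a + b) i = nth a i + nth b i := by
  unfold nth; split_ifs <;> simp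

lemma nth_smul (c : ℝ) (a : Fin n → Vec d) (i : ℕ) : nth (c • a) i = c • nth a i := by
  unfold nth; split_ifs <;> simp

@[simp] lemma dotp_zero_right (a : Vec d) : dotp a 0 = 0 := by simp [dotp]
@[simp] lemma dotp_zero_left (a : Vec d) : dotp 0 a = 0 := by simp [dotp]
@[simp] lemma dotp_single_one (a : Vec d) (j : Fin d) : dotp a (Pi.single j 1) = a j := by
  simp [dotp, Pi.single_apply, mul_ite, Finset.sum_ite_eq']

/-- `nth` as a continuous linear map on `(ℝ^d)^n`. -/
def nthCL (d n : ℕ) (k : ℕ) : (Fin n → Vec d) →L[ℝ] Vec d :=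
  LinearMap.toContinuousLinearMap
    { toFun := fun v => nth v k
      map_add' := fun a b => nth_add a b k
      map_smul' := fun c a => nth_smul c a k }

@[simp] lemma nthCL_apply (k : ℕ) (v : Fin n → Vec d) : nthCL d n k v = nth v k := rfl

/-- projection `x ↦ nth x.1 k` as CLM on phase space -/
def pCL (d n : ℕ) (k : ℕ) : Phase d n →L[ℝ] Vec d :=
  (nthCL d n k).comp (ContinuousLinearMap.fst ℝ _ _)

/-- projection `x ↦ nth x.2.1 k` as CLM on phase space -/
def qCL (d n : ℕ) (k : ℕ) : Phase d n →L[ℝ] Vec d :=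
  (nthCL d n k).comp ((ContinuousLinearMap.fst ℝ _ _).comp (ContinuousLinearMap.snd ℝ _ _))

@[simp] lemma pCL_apply (k : ℕ) (x : Phase d n) : pCL d n k x = nth x.1 k := rfl
@[simp] lemma qCL_apply (k : ℕ) (x : Phase d n) : qCL d n k x = nth x.2.1 k := rfl

lemma dotp_add_right (a b c : Vec d) : dotp a (b + c) = dotp a b + dotp a c := by
  simp [dotp, mul_add, Finset.sum_add_distrib]

lemma dotp_smul_right (c : ℝ) (a b : Vec d) : dotp a (c • b) = c * dotp a b := by
  simp [dotp, Finset.mul_sum]; ring_nf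
  exact Finset.sum_congr rfl fun j _ => by ring

/-- `dotp a ·` as CLM. -/
def dotCL (a : Vec d) : Vec d →L[ℝ] ℝ :=
  LinearMap.toContinuousLinearMap
    { toFun := fun b => dotp a b
      map_add' := fun b c => dotp_add_right a b c
      map_smul' := fun c b => dotp_smul_right c a b }

@[simp] lemma dotCL_apply (a b : Vec d) : dotCL a b = dotp a b := rfl

lemma hasFDerivAt_halfsq (a : Vec d) :
    HasFDerivAt (fun v : Vec d => dotp v v / 2) (dotCL a) a := by
  have h : ∀ j : Fin d, HasFDerivAt (fun v : Vec d => v j * v j)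
      ((2 * a j) • (ContinuousLinearMap.proj j : (Vec d) →L[ℝ] ℝ)) a := by
    intro j
    have hj := hasFDerivAt_apply (𝕜 := ℝ) j a
    have := hj.mul hj
    refine this.congr_fderiv ?_
    ext v; simp; ring
  have hs := HasFDerivAt.fun_sum (u := Finset.univ) (fun j _ => h j)
  have hs2 := hs.const_smul ((2:ℝ)⁻¹)
  have e : (fun v : Vec d => dotp v v / 2) = fun v => (2:ℝ)⁻¹ • ∑ i : Fin d, v i * v i := by
    funext v; simp [dotp, smul_eq_mul]; ring
  rw [e]
  refine hs2.congr_fderiv ?_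
  ext v
  simp [dotp, Finset.smul_sum, Finset.mul_sum]
  exact Finset.sum_congr rfl fun j _ => by ring

end AUX
section AUX2
open Finset
variable {d n : ℕ} {U1 U2 : Vec d → ℝ}

lemma hasFDerivAt_locH (hU1 : ContDiff ℝ (⊤:ℕ∞) U1) (hU2 : ContDiff ℝ (⊤:ℕ∞) U2)
    (k : ℕ) (x : Phase d n) :
    HasFDerivAt (locH d n U1 U2 k)
      ((dotCL (nth x.1 k)).comp (pCL d n k)
        + (fderiv ℝ U1 (nth x.2.1 k)).comp (qCL d n k)
        + (if 2 ≤ k then (2:ℝ)⁻¹ •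
            (fderiv ℝ U2 (nth x.2.1 (k-1) - nth x.2.1 k)).comp (qCL d n (k-1) - qCL d n k) else 0)
        + (if k < n then (2:ℝ)⁻¹ •
            (fderiv ℝ U2 (nth x.2.1 k - nth x.2.1 (k+1))).comp (qCL d n k - qCL d n (k+1)) else 0)) x := by
  have hA : HasFDerivAt (fun y : Phase d n => dotp (nth y.1 k) (nth y.1 k) / 2)
      ((dotCL (nth x.1 k)).comp (pCL d n k)) x :=
    by have h := (hasFDerivAt_halfsq (nth x.1 k)).comp x (pCL d n k).hasFDerivAt; exact h
  have hB : HasFDerivAt (fun y : Phase d n => U1 (nth y.2.1 k))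
      ((fderiv ℝ U1 (nth x.2.1 k)).comp (qCL d n k)) x :=
    ((hU1.differentiable (by simp) (nth x.2.1 k)).hasFDerivAt).comp x (qCL d n k).hasFDerivAt
  have hC : HasFDerivAt (fun y : Phase d n =>
      (if 2 ≤ k then U2 (nth y.2.1 (k-1) - nth y.2.1 k) else 0) / 2)
      (if 2 ≤ k then (2:ℝ)⁻¹ •
        (fderiv ℝ U2 (nth x.2.1 (k-1) - nth x.2.1 k)).comp (qCL d n (k-1) - qCL d n k) else 0) x := by
    by_cases h2 : 2 ≤ k
    · simp only [if_pos h2]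
      have hin : HasFDerivAt (fun y : Phase d n => nth y.2.1 (k-1) - nth y.2.1 k)
          (qCL d n (k-1) - qCL d n k) x :=
        (qCL d n (k-1)).hasFDerivAt.sub (qCL d n k).hasFDerivAt
      have hout := (hU2.differentiable (by simp) (nth x.2.1 (k-1) - nth x.2.1 k)).hasFDerivAt
      have e : (fun y : Phase d n => U2 (nth y.2.1 (k-1) - nth y.2.1 k) / 2)
          = fun y => (2:ℝ)⁻¹ • U2 (nth y.2.1 (k-1) - nth y.2.1 k) := by
        funext y; simp [smul_eq_mul]; ring
      rw [e]
      have h := (hout.comp x hin).const_smul (2:ℝ)⁻¹; exact h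
    · simp only [if_neg h2]
      exact hasFDerivAt_const ((0:ℝ)/2) x
  have hD : HasFDerivAt (fun y : Phase d n =>
      (if k < n then U2 (nth y.2.1 k - nth y.2.1 (k+1)) else 0) / 2)
      (if k < n then (2:ℝ)⁻¹ •
        (fderiv ℝ U2 (nth x.2.1 k - nth x.2.1 (k+1))).comp (qCL d n k - qCL d n (k+1)) else 0) x := by
    by_cases h2 : k < n
    · simp only [if_pos h2]
      have hin : HasFDerivAt (fun y : Phase d n => nth y.2.1 k - nth y.2.1 (k+1))
          (qCL d n k - qCL d n (k+1)) x :=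
        (qCL d n k).hasFDerivAt.sub (qCL d n (k+1)).hasFDerivAt
      have hout := (hU2.differentiable (by simp) (nth x.2.1 k - nth x.2.1 (k+1))).hasFDerivAt
      have e : (fun y : Phase d n => U2 (nth y.2.1 k - nth y.2.1 (k+1)) / 2)
          = fun y => (2:ℝ)⁻¹ • U2 (nth y.2.1 k - nth y.2.1 (k+1)) := by
        funext y; simp [smul_eq_mul]; ring
      rw [e]
      have h := (hout.comp x hin).const_smul (2:ℝ)⁻¹; exact h
    · simp only [if_neg h2]
      exact hasFDerivAt_const ((0:ℝ)/2) x
  exact ((hA.add hB).add hC).add hD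

lemma pd_locH (hU1 : ContDiff ℝ (⊤:ℕ∞) U1) (hU2 : ContDiff ℝ (⊤:ℕ∞) U2)
    (k : ℕ) (v x : Phase d n) :
    pd (locH d n U1 U2 k) v x =
      dotp (nth x.1 k) (nth v.1 k)
      + fderiv ℝ U1 (nth x.2.1 k) (nth v.2.1 k)
      + (if 2 ≤ k then
          fderiv ℝ U2 (nth x.2.1 (k-1) - nth x.2.1 k) (nth v.2.1 (k-1) - nth v.2.1 k) else 0) / 2
      + (if k < n then
          fderiv ℝ U2 (nth x.2.1 k - nth x.2.1 (k+1)) (nth v.2.1 k - nth v.2.1 (k+1)) else 0) / 2 := by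
  rw [pd, (hasFDerivAt_locH hU1 hU2 k x).fderiv]
  by_cases h2 : 2 ≤ k <;> by_cases h3 : k < n <;>
    simp [h2, h3, smul_eq_mul, div_eq_inv_mul, mul_comm]

end AUX2
section AUX3
open Finset
variable {d n : ℕ} {U1 U2 : Vec d → ℝ}

lemma nth_basisQ (i m : ℕ) (j : Fin d) :
    nth (basisQ d n i j) m = if m = i ∧ 1 ≤ i ∧ i ≤ n then Pi.single j 1 else 0 := by
  unfold nth basisQ
  by_cases hm : 1 ≤ m ∧ m ≤ n
  · rw [dif_pos hm]
    by_cases hi : 1 ≤ i ∧ i ≤ n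
    · rw [dif_pos hi]
      by_cases he : m = i
      · subst he; rw [if_pos ⟨rfl, hi⟩, Pi.single_eq_same]
      · rw [if_neg (by tauto)]
        apply Pi.single_eq_of_ne
        simp only [ne_eq, Fin.mk.injEq]
        omega
    · rw [dif_neg hi, if_neg (by tauto)]; rfl
  · rw [dif_neg hm, if_neg (by rintro ⟨rfl, h1, h2⟩; exact hm ⟨h1, h2⟩)]

/-- `∑ j, c j * L (e_j) = L c` -/
lemma sum_mul_apply_single (L : Vec d →L[ℝ] ℝ) (c : Vec d) :
    ∑ j, c j * L (Pi.single j 1) = L c := by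
  conv_rhs => rw [← Finset.univ_sum_single c]
  rw [map_sum]
  refine Finset.sum_congr rfl fun j _ => ?_
  have h : Pi.single j (c j) = c j • (Pi.single j (1:ℝ) : Vec d) := by
    ext l; by_cases hl : l = j <;> simp [Pi.single_apply, hl]
  rw [h, L.map_smul, smul_eq_mul]

/-- key picking lemma for double sums over directions -/
lemma sum_pick (x : Phase d n) (m : ℕ) (hm : 1 ≤ m ∧ m ≤ n) (L : Vec d →L[ℝ] ℝ) :
    ∑ i ∈ Icc 1 n, ∑ j, nth x.1 i j * L (nth (basisQ d n i j) m)
      = L (nth x.1 m) := by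
  rw [Finset.sum_eq_single_of_mem m (by simp [Finset.mem_Icc]; omega)]
  · rw [← sum_mul_apply_single L (nth x.1 m)]
    refine Finset.sum_congr rfl fun j _ => ?_
    rw [nth_basisQ, if_pos ⟨rfl, hm⟩]
  · intro i _ hne
    refine Finset.sum_eq_zero fun j _ => ?_
    rw [nth_basisQ, if_neg (by tauto), map_zero, mul_zero]

end AUX3
section AUX4
open Finset
variable {d n : ℕ} {U1 U2 : Vec d → ℝ}
variable (hU1 : ContDiff ℝ (⊤:ℕ∞) U1) (hU2 : ContDiff ℝ (⊤:ℕ∞) U2)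

include hU1 hU2

lemma pd_locH_eR1 (k : ℕ) (j : Fin d) (y : Phase d n) :
    pd (locH d n U1 U2 k) (eR1 d n j) y = 0 := by
  rw [pd_locH hU1 hU2]
  have h1 : (eR1 d n j).1 = 0 := rfl
  have h2 : (eR1 d n j).2.1 = 0 := rfl
  rw [h1, h2]; simp

lemma pd_locH_eRn (k : ℕ) (j : Fin d) (y : Phase d n) :
    pd (locH d n U1 U2 k) (eRn d n j) y = 0 := by
  rw [pd_locH hU1 hU2]
  have h1 : (eRn d n j).1 = 0 := rfl
  have h2 : (eRn d n j).2.1 = 0 := rfl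
  rw [h1, h2]; simp

lemma pd2_locH_eR1 (k : ℕ) (j : Fin d) (x : Phase d n) :
    pd2 (locH d n U1 U2 k) (eR1 d n j) x = 0 := by
  unfold pd2
  have h : (fun y => fderiv ℝ (locH d n U1 U2 k) y (eR1 d n j)) = fun _ => (0:ℝ) :=
    funext fun y => pd_locH_eR1 hU1 hU2 k j y
  rw [h, fderiv_fun_const]
  simp

lemma pd2_locH_eRn (k : ℕ) (j : Fin d) (x : Phase d n) :
    pd2 (locH d n U1 U2 k) (eRn d n j) x = 0 := by
  unfold pd2
  have h : (fun y => fderiv ℝ (locH d n U1 U2 k) y (eRn d n j)) = fun _ => (0:ℝ) :=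
    funext fun y => pd_locH_eRn hU1 hU2 k j y
  rw [h, fderiv_fun_const]
  simp

lemma pd_locH_eP (k i : ℕ) (j : Fin d) (x : Phase d n) :
    pd (locH d n U1 U2 k) (eP d n i j) x
      = if k = i ∧ 1 ≤ i ∧ i ≤ n then nth x.1 k j else 0 := by
  rw [pd_locH hU1 hU2]
  have h1 : (eP d n i j).1 = basisQ d n i j := rfl
  have h2 : (eP d n i j).2.1 = 0 := rfl
  rw [h1, h2, nth_basisQ]
  split_ifs with h <;> simp

lemma pd_locH_eQ (k i : ℕ) (j : Fin d) (x : Phase d n) :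
    pd (locH d n U1 U2 k) (eQ d n i j) x
      = fderiv ℝ U1 (nth x.2.1 k) (nth (basisQ d n i j) k)
        + (if 2 ≤ k then fderiv ℝ U2 (nth x.2.1 (k-1) - nth x.2.1 k)
            (nth (basisQ d n i j) (k-1) - nth (basisQ d n i j) k) else 0) / 2
        + (if k < n then fderiv ℝ U2 (nth x.2.1 k - nth x.2.1 (k+1))
            (nth (basisQ d n i j) k - nth (basisQ d n i j) (k+1)) else 0) / 2 := by
  rw [pd_locH hU1 hU2]
  have h1 : (eQ d n i j).1 = 0 := rfl
  have h2 : (eQ d n i j).2.1 = basisQ d n i j := rfl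
  rw [h1, h2]; simp

lemma hasFDerivAt_Vpot (q : Fin n → Vec d) :
    HasFDerivAt (Vpot d n U1 U2)
      ((∑ i ∈ Icc 1 n, (fderiv ℝ U1 (nth q i)).comp (nthCL d n i))
        + ∑ i ∈ Icc 1 (n-1),
            (fderiv ℝ U2 (nth q i - nth q (i+1))).comp (nthCL d n i - nthCL d n (i+1))) q := by
  have hA : HasFDerivAt (fun w : Fin n → Vec d => ∑ i ∈ Icc 1 n, U1 (nth w i))
      (∑ i ∈ Icc 1 n, (fderiv ℝ U1 (nth q i)).comp (nthCL d n i)) q :=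
    HasFDerivAt.fun_sum fun i _ =>
      ((hU1.differentiable (by simp) (nth q i)).hasFDerivAt).comp q (nthCL d n i).hasFDerivAt
  have hB : HasFDerivAt (fun w : Fin n → Vec d => ∑ i ∈ Icc 1 (n-1), U2 (nth w i - nth w (i+1)))
      (∑ i ∈ Icc 1 (n-1),
        (fderiv ℝ U2 (nth q i - nth q (i+1))).comp (nthCL d n i - nthCL d n (i+1))) q :=
    HasFDerivAt.fun_sum fun i _ =>
      ((hU2.differentiable (by simp) _).hasFDerivAt).comp q
        ((nthCL d n i).hasFDerivAt.sub (nthCL d n (i+1)).hasFDerivAt)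
  exact hA.add hB

lemma fderiv_Vpot_basis (q : Fin n → Vec d) (m : ℕ) (hm1 : 1 ≤ m) (hmn : m ≤ n) (j : Fin d) :
    fderiv ℝ (Vpot d n U1 U2) q (basisQ d n m j)
      = fderiv ℝ U1 (nth q m) (Pi.single j 1)
        - (if 2 ≤ m then fderiv ℝ U2 (nth q (m-1) - nth q m) (Pi.single j 1) else 0)
        + (if m < n then fderiv ℝ U2 (nth q m - nth q (m+1)) (Pi.single j 1) else 0) := by
  rw [(hasFDerivAt_Vpot hU1 hU2 q).fderiv]
  simp only [ContinuousLinearMap.add_apply, ContinuousLinearMap.coe_sum', Finset.sum_apply,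
    ContinuousLinearMap.comp_apply, nthCL_apply, ContinuousLinearMap.coe_sub', Pi.sub_apply]
  have e1 : ∑ i ∈ Icc 1 n, fderiv ℝ U1 (nth q i) (nth (basisQ d n m j) i)
      = fderiv ℝ U1 (nth q m) (Pi.single j 1) := by
    rw [Finset.sum_eq_single_of_mem m (Finset.mem_Icc.mpr ⟨hm1, hmn⟩)]
    · rw [nth_basisQ, if_pos ⟨rfl, hm1, hmn⟩]
    · intro i _ hne; rw [nth_basisQ, if_neg (by tauto), map_zero]
  have e2 : ∑ i ∈ Icc 1 (n-1), fderiv ℝ U2 (nth q i - nth q (i+1))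
        (nth (basisQ d n m j) i - nth (basisQ d n m j) (i+1))
      = (if m < n then fderiv ℝ U2 (nth q m - nth q (m+1)) (Pi.single j 1) else 0)
        - (if 2 ≤ m then fderiv ℝ U2 (nth q (m-1) - nth q m) (Pi.single j 1) else 0) := by
    have split : ∀ i, fderiv ℝ U2 (nth q i - nth q (i+1))
          (nth (basisQ d n m j) i - nth (basisQ d n m j) (i+1))
        = fderiv ℝ U2 (nth q i - nth q (i+1)) (nth (basisQ d n m j) i)
          - fderiv ℝ U2 (nth q i - nth q (i+1)) (nth (basisQ d n m j) (i+1)) :=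
      fun i => map_sub _ _ _
    rw [Finset.sum_congr rfl (fun i _ => split i), Finset.sum_sub_distrib]
    congr 1
    · by_cases hm : m < n
      · rw [Finset.sum_eq_single_of_mem m (Finset.mem_Icc.mpr ⟨hm1, by omega⟩), if_pos hm]
        · rw [nth_basisQ, if_pos ⟨rfl, hm1, hmn⟩]
        · intro i _ hne; rw [nth_basisQ, if_neg (by tauto), map_zero]
      · rw [if_neg hm]
        refine Finset.sum_eq_zero fun i hi => ?_
        have hii := Finset.mem_Icc.mp hi
        rw [nth_basisQ, if_neg (by rintro ⟨rfl, -⟩; omega), map_zero]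
    · by_cases h2 : 2 ≤ m
      · rw [Finset.sum_eq_single_of_mem (m-1) (Finset.mem_Icc.mpr ⟨by omega, by omega⟩), if_pos h2]
        · have hmm : m - 1 + 1 = m := by omega
          rw [hmm, nth_basisQ, if_pos ⟨rfl, hm1, hmn⟩]
        · intro i hi hne
          have hii := Finset.mem_Icc.mp hi
          rw [nth_basisQ, if_neg (by rintro ⟨he, -⟩; omega), map_zero]
      · rw [if_neg h2]
        refine Finset.sum_eq_zero fun i hi => ?_
        have hii := Finset.mem_Icc.mp hi
        rw [nth_basisQ, if_neg (by rintro ⟨he, -⟩; omega), map_zero]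
  rw [e1, e2]; ring

end AUX4
section AUX5
open Finset
variable {d n : ℕ} {U1 U2 : Vec d → ℝ}

lemma sum_apply_single_mul (L : Vec d →L[ℝ] ℝ) (c : Vec d) :
    ∑ j, L (Pi.single j 1) * c j = L c := by
  rw [← sum_mul_apply_single L c]
  exact Finset.sum_congr rfl fun j _ => mul_comm _ _

lemma sum_avg (L : Vec d →L[ℝ] ℝ) (a b : Vec d) :
    ∑ j, ((a j + b j)/2) * L (Pi.single j 1) = (L a + L b)/2 := by
  calc ∑ j, ((a j + b j)/2) * L (Pi.single j 1) = L ((2:ℝ)⁻¹ • (a+b)) := by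
        rw [← sum_mul_apply_single L ((2:ℝ)⁻¹ • (a+b))]
        refine Finset.sum_congr rfl fun j _ => ?_
        have h : ((2:ℝ)⁻¹ • (a+b)) j = (a j + b j)/2 := by
          simp [smul_eq_mul]; ring
        rw [h]
    _ = (L a + L b)/2 := by
        rw [L.map_smul, L.map_add]; simp [smul_eq_mul]; ring

variable (hU1 : ContDiff ℝ (⊤:ℕ∞) U1) (hU2 : ContDiff ℝ (⊤:ℕ∞) U2)
include hU1 hU2

lemma gen_locH (ga lam T1 Tn : ℝ) (hn : 2 ≤ n) (k : ℕ) (hk1 : 1 ≤ k) (hkn : k ≤ n)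
    (x : Phase d n) :
    gen d n U1 U2 ga lam T1 Tn (locH d n U1 U2 k) x
      = flow d n U2 lam (k-1) x - flow d n U2 lam k x := by
  have h1n : (1:ℕ) ≤ n := by omega
  set F := fderiv ℝ U2 (nth x.2.1 (k-1) - nth x.2.1 k) with hF
  set G := fderiv ℝ U2 (nth x.2.1 k - nth x.2.1 (k+1)) with hG
  have hgen0 : gen0 d n ga T1 Tn (locH d n U1 U2 k) x = 0 := by
    unfold gen0
    simp [pd2_locH_eR1 hU1 hU2, pd2_locH_eRn hU1 hU2, pd_locH_eR1 hU1 hU2,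
      pd_locH_eRn hU1 hU2]
  have ha : ∑ j, nth x.1 1 j * pd (locH d n U1 U2 k) (eR1 d n j) x = 0 := by
    simp [pd_locH_eR1 hU1 hU2]
  have hb : ∑ j, nth x.1 n j * pd (locH d n U1 U2 k) (eRn d n j) x = 0 := by
    simp [pd_locH_eRn hU1 hU2]
  have hc : ∑ j, x.2.2.1 j * pd (locH d n U1 U2 k) (eP d n 1 j) x
      = if k = 1 then dotp x.2.2.1 (nth x.1 1) else 0 := by
    simp only [pd_locH_eP hU1 hU2]
    by_cases he : k = 1
    · subst he; simp [h1n, dotp]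
    · simp [he]
  have hd : ∑ j, x.2.2.2 j * pd (locH d n U1 U2 k) (eP d n n j) x
      = if k = n then dotp x.2.2.2 (nth x.1 n) else 0 := by
    simp only [pd_locH_eP hU1 hU2]
    by_cases he : k = n
    · subst he; simp [h1n, hk1, dotp]
    · simp [he]
  have step : ∀ i ∈ Icc 1 n, ∑ j, nth x.1 i j * pd (locH d n U1 U2 k) (eQ d n i j) x
      = (∑ j, nth x.1 i j * fderiv ℝ U1 (nth x.2.1 k) (nth (basisQ d n i j) k))
        + (∑ j, nth x.1 i j * (if 2 ≤ k then
            F (nth (basisQ d n i j) (k-1) - nth (basisQ d n i j) k) else 0)) / 2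
        + (∑ j, nth x.1 i j * (if k < n then
            G (nth (basisQ d n i j) k - nth (basisQ d n i j) (k+1)) else 0)) / 2 := by
    intro i _
    rw [Finset.sum_div, Finset.sum_div, ← Finset.sum_add_distrib, ← Finset.sum_add_distrib]
    refine Finset.sum_congr rfl fun j _ => ?_
    rw [pd_locH_eQ hU1 hU2, ← hF, ← hG]
    by_cases h2 : 2 ≤ k <;> by_cases h3 : k < n <;> simp [h2, h3] <;> ring
  have t1 : ∑ i ∈ Icc 1 n, ∑ j, nth x.1 i j
        * fderiv ℝ U1 (nth x.2.1 k) (nth (basisQ d n i j) k)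
      = fderiv ℝ U1 (nth x.2.1 k) (nth x.1 k) := sum_pick x k ⟨hk1, hkn⟩ _
  have t2 : ∑ i ∈ Icc 1 n, ∑ j, nth x.1 i j * (if 2 ≤ k then
        F (nth (basisQ d n i j) (k-1) - nth (basisQ d n i j) k) else 0)
      = if 2 ≤ k then F (nth x.1 (k-1)) - F (nth x.1 k) else 0 := by
    by_cases h2 : 2 ≤ k
    · simp only [if_pos h2]
      have e2 : ∀ i ∈ Icc 1 n, ∑ j, nth x.1 i j
            * F (nth (basisQ d n i j) (k-1) - nth (basisQ d n i j) k)
          = (∑ j, nth x.1 i j * F (nth (basisQ d n i j) (k-1)))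
            - ∑ j, nth x.1 i j * F (nth (basisQ d n i j) k) := by
        intro i _
        rw [← Finset.sum_sub_distrib]
        exact Finset.sum_congr rfl fun j _ => by rw [map_sub]; ring
      rw [Finset.sum_congr rfl e2, Finset.sum_sub_distrib,
        sum_pick x (k-1) ⟨by omega, by omega⟩, sum_pick x k ⟨hk1, hkn⟩]
    · simp [h2]
  have t3 : ∑ i ∈ Icc 1 n, ∑ j, nth x.1 i j * (if k < n then
        G (nth (basisQ d n i j) k - nth (basisQ d n i j) (k+1)) else 0)
      = if k < n then G (nth x.1 k) - G (nth x.1 (k+1)) else 0 := by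
    by_cases h3 : k < n
    · simp only [if_pos h3]
      have e3 : ∀ i ∈ Icc 1 n, ∑ j, nth x.1 i j
            * G (nth (basisQ d n i j) k - nth (basisQ d n i j) (k+1))
          = (∑ j, nth x.1 i j * G (nth (basisQ d n i j) k))
            - ∑ j, nth x.1 i j * G (nth (basisQ d n i j) (k+1)) := by
        intro i _
        rw [← Finset.sum_sub_distrib]
        exact Finset.sum_congr rfl fun j _ => by rw [map_sub]; ring
      rw [Finset.sum_congr rfl e3, Finset.sum_sub_distrib,
        sum_pick x k ⟨hk1, hkn⟩, sum_pick x (k+1) ⟨by omega, by omega⟩]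
    · simp [h3]
  have hQ : ∑ i ∈ Icc 1 n, ∑ j, nth x.1 i j * pd (locH d n U1 U2 k) (eQ d n i j) x
      = fderiv ℝ U1 (nth x.2.1 k) (nth x.1 k)
        + (if 2 ≤ k then F (nth x.1 (k-1)) - F (nth x.1 k) else 0) / 2
        + (if k < n then G (nth x.1 k) - G (nth x.1 (k+1)) else 0) / 2 := by
    rw [Finset.sum_congr rfl step, Finset.sum_add_distrib, Finset.sum_add_distrib,
      ← Finset.sum_div, ← Finset.sum_div, t1, t2, t3]
  have hW : ∑ i ∈ Icc 1 n, ∑ j, fderiv ℝ (Vpot d n U1 U2) x.2.1 (basisQ d n i j)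
        * pd (locH d n U1 U2 k) (eP d n i j) x
      = fderiv ℝ U1 (nth x.2.1 k) (nth x.1 k)
        - (if 2 ≤ k then F (nth x.1 k) else 0)
        + (if k < n then G (nth x.1 k) else 0) := by
    rw [Finset.sum_eq_single_of_mem k (Finset.mem_Icc.mpr ⟨hk1, hkn⟩)]
    · have key : ∀ j, fderiv ℝ (Vpot d n U1 U2) x.2.1 (basisQ d n k j)
          * pd (locH d n U1 U2 k) (eP d n k j) x
          = fderiv ℝ U1 (nth x.2.1 k) (Pi.single j 1) * nth x.1 k j
            - (if 2 ≤ k then F (Pi.single j 1) * nth x.1 k j else 0)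
            + (if k < n then G (Pi.single j 1) * nth x.1 k j else 0) := by
        intro j
        rw [pd_locH_eP hU1 hU2, if_pos ⟨rfl, hk1, hkn⟩,
          fderiv_Vpot_basis hU1 hU2 x.2.1 k hk1 hkn j, ← hF, ← hG]
        by_cases h2 : 2 ≤ k <;> by_cases h3 : k < n <;> simp [h2, h3] <;> ring
      rw [Finset.sum_congr rfl (fun j _ => key j), Finset.sum_add_distrib,
        Finset.sum_sub_distrib]
      by_cases h2 : 2 ≤ k <;> by_cases h3 : k < n <;>
        simp [h2, h3, sum_apply_single_mul]
    · intro i _ hne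
      refine Finset.sum_eq_zero fun j _ => ?_
      rw [pd_locH_eP hU1 hU2, if_neg (by tauto), mul_zero]
  have hflow1 : flow d n U2 lam (k-1) x
      = if k = 1 then -lam * dotp x.2.2.1 (nth x.1 1) else
          (F (nth x.1 (k-1)) + F (nth x.1 k))/2 := by
    by_cases hk : k = 1
    · subst hk; simp [flow]
    · rw [if_neg hk]
      unfold flow
      rw [if_neg (by omega), if_neg (by omega)]
      have e : k - 1 + 1 = k := by omega
      rw [e, ← hF]
      exact sum_avg F (nth x.1 (k-1)) (nth x.1 k)
  have hflow2 : flow d n U2 lam k x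
      = if k = n then lam * dotp x.2.2.2 (nth x.1 n) else
          (G (nth x.1 k) + G (nth x.1 (k+1)))/2 := by
    by_cases hk : k = n
    · subst hk; unfold flow; rw [if_neg (by omega)]; simp
    · rw [if_neg hk]
      unfold flow
      rw [if_neg (by omega), if_neg hk, ← hG]
      exact sum_avg G (nth x.1 k) (nth x.1 (k+1))
  unfold gen gen1
  rw [hgen0, ha, hb, hc, hd, hQ, hW, hflow1, hflow2]
  by_cases hA : k = 1 <;> by_cases hB : k = n
  · omega
  · have h2 : ¬ 2 ≤ k := by omega
    have h3 : k < n := by omega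
    simp only [if_pos hA, if_neg hB, if_neg h2, if_pos h3]
    ring
  · have h2 : 2 ≤ k := by omega
    have h3 : ¬ k < n := by omega
    simp only [if_neg hA, if_pos hB, if_pos h2, if_neg h3]
    ring
  · have h2 : 2 ≤ k := by omega
    have h3 : k < n := by omega
    simp only [if_neg hA, if_neg hB, if_pos h2, if_pos h3]
    ring

end AUX5
section AUX6
open Finset
variable {d n : ℕ} {U1 U2 : Vec d → ℝ}

lemma contDiff_locH (hU1 : ContDiff ℝ (⊤:ℕ∞) U1) (hU2 : ContDiff ℝ (⊤:ℕ∞) U2) (k : ℕ) :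
    ContDiff ℝ (⊤:ℕ∞) (locH d n U1 U2 k) := by
  have hsq : ContDiff ℝ (⊤:ℕ∞) (fun v : Vec d => dotp v v) := by
    unfold dotp
    exact ContDiff.sum fun j _ =>
      ((ContinuousLinearMap.proj j : Vec d →L[ℝ] ℝ).contDiff).mul
        ((ContinuousLinearMap.proj j : Vec d →L[ℝ] ℝ).contDiff)
  have hA : ContDiff ℝ (⊤:ℕ∞) (fun y : Phase d n => dotp (nth y.1 k) (nth y.1 k) / 2) :=
    (hsq.comp (pCL d n k).contDiff).div_const 2
  have hB : ContDiff ℝ (⊤:ℕ∞) (fun y : Phase d n => U1 (nth y.2.1 k)) :=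
    hU1.comp (qCL d n k).contDiff
  have hC : ContDiff ℝ (⊤:ℕ∞) (fun y : Phase d n =>
      (if 2 ≤ k then U2 (nth y.2.1 (k-1) - nth y.2.1 k) else 0) / 2) := by
    by_cases h2 : 2 ≤ k
    · simp only [if_pos h2]
      exact (hU2.comp ((qCL d n (k-1)).contDiff.sub (qCL d n k).contDiff)).div_const 2
    · simp only [if_neg h2]
      exact contDiff_const
  have hD : ContDiff ℝ (⊤:ℕ∞) (fun y : Phase d n =>
      (if k < n then U2 (nth y.2.1 k - nth y.2.1 (k+1)) else 0) / 2) := by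
    by_cases h3 : k < n
    · simp only [if_pos h3]
      exact (hU2.comp ((qCL d n k).contDiff.sub (qCL d n (k+1)).contDiff)).div_const 2
    · simp only [if_neg h3]
      exact contDiff_const
  exact ((hA.add hB).add hC).add hD

lemma gen_zero (ga lam T1 Tn : ℝ) (x : Phase d n) :
    gen d n U1 U2 ga lam T1 Tn (fun _ => (0:ℝ)) x = 0 := by
  have hpd : ∀ (v y : Phase d n), pd (fun _ => (0:ℝ)) v y = 0 := by
    intro v y; rw [pd, fderiv_fun_const]; simp
  have hpd2 : ∀ (v y : Phase d n), pd2 (fun _ => (0:ℝ)) v y = 0 := by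
    intro v y; unfold pd2
    have e : (fun z : Phase d n => fderiv ℝ (fun _ => (0:ℝ)) z v) = fun _ => (0:ℝ) :=
      funext fun z => by rw [fderiv_fun_const]; simp
    rw [e, fderiv_fun_const]; simp
  unfold gen gen0 gen1
  simp [hpd, hpd2]

lemma gen_add (ga lam T1 Tn : ℝ) (f g : Phase d n → ℝ)
    (hf : ContDiff ℝ (⊤:ℕ∞) f) (hg : ContDiff ℝ (⊤:ℕ∞) g) (x : Phase d n) :
    gen d n U1 U2 ga lam T1 Tn (fun y => f y + g y) x
      = gen d n U1 U2 ga lam T1 Tn f x + gen d n U1 U2 ga lam T1 Tn g x := by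
  have hfd : ∀ y, DifferentiableAt ℝ f y := fun y => (hf.differentiable (by simp)).differentiableAt
  have hgd : ∀ y, DifferentiableAt ℝ g y := fun y => (hg.differentiable (by simp)).differentiableAt
  have hsm : ((⊤:ℕ∞) : WithTop ℕ∞) + 1 ≤ ((⊤:ℕ∞) : WithTop ℕ∞) := by simp
  have hf1 : ∀ v : Phase d n, Differentiable ℝ (fun y => fderiv ℝ f y v) := fun v =>
    ((hf.fderiv_right hsm).clm_apply contDiff_const).differentiable (by simp)
  have hg1 : ∀ v : Phase d n, Differentiable ℝ (fun y => fderiv ℝ g y v) := fun v =>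
    ((hg.fderiv_right hsm).clm_apply contDiff_const).differentiable (by simp)
  have hpd : ∀ (v y : Phase d n), pd (fun y => f y + g y) v y = pd f v y + pd g v y := by
    intro v y; rw [pd, pd, pd, fderiv_fun_add (hfd y) (hgd y)]; simp
  have hpd2 : ∀ (v y : Phase d n), pd2 (fun y => f y + g y) v y = pd2 f v y + pd2 g v y := by
    intro v y; unfold pd2
    have e : (fun z : Phase d n => fderiv ℝ (fun y => f y + g y) z v)
        = fun z => fderiv ℝ f z v + fderiv ℝ g z v :=
      funext fun z => by rw [fderiv_fun_add (hfd z) (hgd z)]; simp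
    rw [e, fderiv_fun_add (hf1 v y) (hg1 v y)]; simp
  unfold gen gen0 gen1
  simp only [hpd, hpd2]
  simp only [mul_add, Finset.sum_add_distrib]
  ring

lemma gen_const_mul (ga lam T1 Tn : ℝ) (c : ℝ) (f : Phase d n → ℝ)
    (hf : ContDiff ℝ (⊤:ℕ∞) f) (x : Phase d n) :
    gen d n U1 U2 ga lam T1 Tn (fun y => c * f y) x
      = c * gen d n U1 U2 ga lam T1 Tn f x := by
  have hfd : ∀ y, DifferentiableAt ℝ f y := fun y => (hf.differentiable (by simp)).differentiableAt
  have hsm : ((⊤:ℕ∞) : WithTop ℕ∞) + 1 ≤ ((⊤:ℕ∞) : WithTop ℕ∞) := by simp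
  have hf1 : ∀ v : Phase d n, Differentiable ℝ (fun y => fderiv ℝ f y v) := fun v =>
    ((hf.fderiv_right hsm).clm_apply contDiff_const).differentiable (by simp)
  have hpd : ∀ (v y : Phase d n), pd (fun y => c * f y) v y = c * pd f v y := by
    intro v y; rw [pd, pd, fderiv_const_mul (hfd y) c]; simp
  have hpd2 : ∀ (v y : Phase d n), pd2 (fun y => c * f y) v y = c * pd2 f v y := by
    intro v y; unfold pd2
    have e : (fun z : Phase d n => fderiv ℝ (fun y => c * f y) z v)
        = fun z => c * fderiv ℝ f z v :=
      funext fun z => by rw [fderiv_const_mul (hfd z) c]; simp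
    rw [e, fderiv_const_mul (hf1 v y) c]; simp
  have pull : ∀ {α : Type} (s : Finset α) (a t : α → ℝ),
      ∑ j ∈ s, a j * (c * t j) = c * ∑ j ∈ s, a j * t j := by
    intro α s a t; rw [Finset.mul_sum]; exact Finset.sum_congr rfl fun j _ => by ring
  have pull2 : ∀ {α : Type} (s : Finset α) (t : α → ℝ),
      ∑ j ∈ s, c * t j = c * ∑ j ∈ s, t j := by
    intro α s t; rw [Finset.mul_sum]
  unfold gen gen0 gen1
  simp only [hpd, hpd2, pull, pull2]
  ring

lemma gen_sum (ga lam T1 Tn : ℝ) (s : Finset ℕ) (F : ℕ → Phase d n → ℝ)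
    (hF : ∀ k ∈ s, ContDiff ℝ (⊤:ℕ∞) (F k)) (x : Phase d n) :
    gen d n U1 U2 ga lam T1 Tn (fun y => ∑ k ∈ s, F k y) x
      = ∑ k ∈ s, gen d n U1 U2 ga lam T1 Tn (F k) x := by
  classical
  induction s using Finset.induction_on with
  | empty => simpa using gen_zero ga lam T1 Tn x
  | @insert a s ha ih =>
    have e : (fun y => ∑ k ∈ insert a s, F k y) = fun y => F a y + ∑ k ∈ s, F k y :=
      funext fun y => Finset.sum_insert ha
    rw [e, gen_add ga lam T1 Tn _ _ (hF a (Finset.mem_insert_self a s))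
        (ContDiff.sum fun k hk => hF k (Finset.mem_insert_of_mem hk)) x,
      ih (fun k hk => hF k (Finset.mem_insert_of_mem hk)), Finset.sum_insert ha]

lemma Rfun_sub (T1 Tn : ℝ) (i j : ℕ) (hji : j ≤ i) (hin : i ≤ n) (y : Phase d n) :
    Rfun d n U1 U2 T1 Tn i y - Rfun d n U1 U2 T1 Tn j y
      = ∑ k ∈ Ioc j i, (1/T1 - 1/Tn) * locH d n U1 U2 k y := by
  have eI : ∀ a m : ℕ, Icc (a+1) m = Ioc a m := by
    intro a m; ext b; simp [Finset.mem_Icc, Finset.mem_Ioc]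
  have e1 : ∀ m : ℕ, Icc 1 m = Ioc 0 m := fun m => eI 0 m
  unfold Rfun
  rw [e1 i, e1 j, eI i n, eI j n]
  rw [← Finset.sum_Ioc_consecutive (fun k => locH d n U1 U2 k y) (Nat.zero_le j) hji]
  rw [← Finset.sum_Ioc_consecutive (fun k => locH d n U1 U2 k y) hji hin]
  have eR : ∑ k ∈ Ioc j i, (1/T1 - 1/Tn) * locH d n U1 U2 k y
      = (1/T1 - 1/Tn) * ∑ k ∈ Ioc j i, locH d n U1 U2 k y := by rw [Finset.mul_sum]
  rw [eR]; ring

lemma flow_telescope (lam : ℝ) (i j : ℕ) (hji : j ≤ i) (x : Phase d n) :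
    ∑ k ∈ Ioc j i, (flow d n U2 lam (k-1) x - flow d n U2 lam k x)
      = flow d n U2 lam j x - flow d n U2 lam i x := by
  induction i, hji using Nat.le_induction with
  | base => simp
  | succ m hm ih =>
    rw [Finset.sum_Ioc_succ_top hm, ih]
    have e : m + 1 - 1 = m := rfl
    rw [e]; ring

end AUX6
/-- For all `0 ≤ i, j ≤ n`, `σ_i - σ_j = L (R_i - R_j)`. -/
theorem sigma_sub_sigma_eq_gen_R_sub_R
    (d n : ℕ) (hd : 1 ≤ d) (hn : 2 ≤ n)
    (U1 U2 : Vec d → ℝ) (hU1 : ContDiff ℝ (⊤ : ℕ∞) U1) (hU2 : ContDiff ℝ (⊤ : ℕ∞) U2)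
    (ga lam T1 Tn : ℝ) (hga : 0 < ga) (hT1 : 0 < T1) (hTn : 0 < Tn)
    (i j : ℕ) (hi : i ≤ n) (hj : j ≤ n) :
    ∀ x : Phase d n,
      sigmaF d n U2 lam T1 Tn i x - sigmaF d n U2 lam T1 Tn j x
        = gen d n U1 U2 ga lam T1 Tn
            (fun y => Rfun d n U1 U2 T1 Tn i y - Rfun d n U1 U2 T1 Tn j y) x := by
  intro x
  rcases le_total j i with hji | hij
  · have hfun : (fun y => Rfun d n U1 U2 T1 Tn i y - Rfun d n U1 U2 T1 Tn j y)
        = fun y => ∑ k ∈ Finset.Ioc j i, (1/T1 - 1/Tn) * locH d n U1 U2 k y :=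
      funext fun y => Rfun_sub T1 Tn i j hji hi y
    rw [hfun, gen_sum ga lam T1 Tn _ _
      (fun k _ => contDiff_const.mul (contDiff_locH hU1 hU2 k)) x]
    have e1 : ∀ k ∈ Finset.Ioc j i,
        gen d n U1 U2 ga lam T1 Tn (fun y => (1/T1 - 1/Tn) * locH d n U1 U2 k y) x
          = (1/T1 - 1/Tn) * (flow d n U2 lam (k-1) x - flow d n U2 lam k x) := by
      intro k hk
      have hk' := Finset.mem_Ioc.mp hk
      rw [gen_const_mul ga lam T1 Tn _ _ (contDiff_locH hU1 hU2 k) x,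
        gen_locH hU1 hU2 ga lam T1 Tn hn k (by omega) (by omega) x]
    rw [Finset.sum_congr rfl e1, ← Finset.mul_sum, flow_telescope lam i j hji x]
    unfold sigmaF
    ring
  · have hfun : (fun y => Rfun d n U1 U2 T1 Tn i y - Rfun d n U1 U2 T1 Tn j y)
        = fun y => ∑ k ∈ Finset.Ioc i j, (-(1/T1 - 1/Tn)) * locH d n U1 U2 k y := by
      funext y
      have h := Rfun_sub (U1 := U1) (U2 := U2) T1 Tn j i hij hj y
      have e : ∑ k ∈ Finset.Ioc i j, (-(1/T1 - 1/Tn)) * locH d n U1 U2 k y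
          = -∑ k ∈ Finset.Ioc i j, (1/T1 - 1/Tn) * locH d n U1 U2 k y := by
        rw [← Finset.sum_neg_distrib]
        exact Finset.sum_congr rfl fun _ _ => by ring
      rw [e, ← h]; ring
    rw [hfun, gen_sum ga lam T1 Tn _ _
      (fun k _ => contDiff_const.mul (contDiff_locH hU1 hU2 k)) x]
    have e1 : ∀ k ∈ Finset.Ioc i j,
        gen d n U1 U2 ga lam T1 Tn (fun y => (-(1/T1 - 1/Tn)) * locH d n U1 U2 k y) x
          = (-(1/T1 - 1/Tn)) * (flow d n U2 lam (k-1) x - flow d n U2 lam k x) := by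
      intro k hk
      have hk' := Finset.mem_Ioc.mp hk
      rw [gen_const_mul ga lam T1 Tn _ _ (contDiff_locH hU1 hU2 k) x,
        gen_locH hU1 hU2 ga lam T1 Tn hn k (by omega) (by omega) x]
    rw [Finset.sum_congr rfl e1, ← Finset.mul_sum, flow_telescope lam j i hij x]
    unfold sigmaF
    ring
end EP
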